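/- arXiv:1608.03315 — 5 statements merged into one kernel-verified Lean document; each statement's English description precedes it below -/
import Mathlib

section
/- Let 0 → A₁ → A₂ → A₃ → A₄ → 0 be an exact sequence of modules over a (commutative) ring R, with A₁ and A₄ finite. Then for any element γ ∈ R, the kernel and the cokernel of the induced map A₂/(γ·A₂) → A₃/(γ·A₃) both have cardinality at most |A₁|·|A₄|. -/
/-!
A diagram chase. An element of `A₂/γA₂` killed by the induced map is `[x]` with `f₂ x = γ y`;
then `γ f₃ y = 0`, and `[x]` is determined up to the image of `A₁` by `f₃ y ∈ A₄[γ]`, which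
gives a surjection `A₁ × A₄[γ] → ker`. The cokernel is `A₃ / (γA₃ + f₂ A₂)`, a quotient of
`A₃ / f₂ A₂ ≅ A₄`.
-/

namespace Submodule

variable {R M : Type*} [CommRing R] [AddCommGroup M] [Module R M]

theorem mem_ideal_span_singleton_smul_top_iff {γ : R} {x : M} :
    x ∈ (Ideal.span {γ} • ⊤ : Submodule R M) ↔ ∃ y, γ • y = x := by
  simp [ideal_span_singleton_smul, mem_smul_pointwise_iff_exists]

end Submodule

section DiagramChase

variable {R L M N P : Type*} [CommRing R]
  [AddCommGroup L] [AddCommGroup M] [AddCommGroup N] [AddCommGroup P]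
  [Module R L] [Module R M] [Module R N] [Module R P]
  {f₁ : L →ₗ[R] M} {f₂ : M →ₗ[R] N} {f₃ : N →ₗ[R] P}

open Submodule

theorem exists_smul_lift_of_mem_torsionBy (h23 : Function.Exact f₂ f₃)
    (hf₃ : Function.Surjective f₃) {γ : R} (t : torsionBy R P γ) :
    ∃ x y, f₂ x = γ • y ∧ f₃ y = t := by
  obtain ⟨y, hy⟩ := hf₃ t
  obtain ⟨x, hx⟩ := (h23 (γ • y)).mp <| by
    rw [map_smul, hy, ← mem_torsionBy_iff]
    exact t.2
  exact ⟨x, y, hx, hy⟩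

theorem exists_eq_add_smul_of_map_eq_smul (h12 : Function.Exact f₁ f₂)
    (h23 : Function.Exact f₂ f₃) {γ : R} {x x₀ : M} {y y₀ : N}
    (hx : f₂ x = γ • y) (hx₀ : f₂ x₀ = γ • y₀) (hy : f₃ y = f₃ y₀) :
    ∃ a z, x = f₁ a + x₀ + γ • z := by
  obtain ⟨z, hz⟩ := (h23 (y - y₀)).mp (by rw [map_sub, hy, sub_self])
  obtain ⟨a, ha⟩ := (h12 (x - x₀ - γ • z)).mp <| by
    rw [map_sub, map_sub, map_smul, hz, hx, hx₀, smul_sub]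
    abel
  exact ⟨a, z, by rw [ha]; abel⟩

theorem exists_surjective_toKer_mapQ_smul (h12 : Function.Exact f₁ f₂)
    (h23 : Function.Exact f₂ f₃) (hf₃ : Function.Surjective f₃) (γ : R)
    (h : (Ideal.span {γ} • ⊤ : Submodule R M) ≤
      (Ideal.span {γ} • ⊤ : Submodule R N).comap f₂) :
    ∃ F : L × torsionBy R P γ → LinearMap.ker (mapQ _ _ f₂ h), Function.Surjective F := by
  have mk_mem_ker {x : M} :
      Submodule.Quotient.mk x ∈ LinearMap.ker (mapQ _ _ f₂ h) ↔ ∃ y, f₂ x = γ • y := by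
    rw [LinearMap.mem_ker, mapQ_apply, Submodule.Quotient.mk_eq_zero,
      mem_ideal_span_singleton_smul_top_iff]
    simp only [eq_comm]
  choose x₀ y₀ hx₀ hy₀ using exists_smul_lift_of_mem_torsionBy h23 hf₃ (γ := γ)
  refine ⟨fun p ↦ ⟨Submodule.Quotient.mk (f₁ p.1 + x₀ p.2),
    mk_mem_ker.mpr ⟨y₀ p.2, ?_⟩⟩, ?_⟩
  · rw [map_add, h12.apply_apply_eq_zero, zero_add, hx₀]
  rintro ⟨k, hk⟩
  obtain ⟨x, rfl⟩ := Submodule.Quotient.mk_surjective _ k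
  obtain ⟨y, hy⟩ := mk_mem_ker.mp hk
  have ht : f₃ y ∈ torsionBy R P γ := by
    rw [mem_torsionBy_iff, ← map_smul, ← hy, h23.apply_apply_eq_zero]
  obtain ⟨a, z, rfl⟩ :=
    exists_eq_add_smul_of_map_eq_smul h12 h23 hy (hx₀ ⟨_, ht⟩) (hy₀ ⟨_, ht⟩).symm
  refine ⟨(a, ⟨_, ht⟩), Subtype.ext ?_⟩
  rw [Submodule.Quotient.eq, sub_add_cancel_left, neg_mem_iff,
    mem_ideal_span_singleton_smul_top_iff]
  exact ⟨z, rfl⟩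

theorem exists_surjective_toCokernel_mapQ (h23 : Function.Exact f₂ f₃)
    (hf₃ : Function.Surjective f₃) (p : Submodule R M) (q : Submodule R N)
    (h : p ≤ q.comap f₂) :
    ∃ G : P →ₗ[R] (N ⧸ q) ⧸ LinearMap.range (p.mapQ q f₂ h), Function.Surjective G := by
  set φ := (LinearMap.range (p.mapQ q f₂ h)).mkQ ∘ₗ q.mkQ
  have hker : LinearMap.ker f₃ ≤ LinearMap.ker φ := by
    rintro _ hy
    obtain ⟨x, rfl⟩ := (h23 _).mp hy
    simp only [LinearMap.mem_ker, φ, LinearMap.comp_apply, mkQ_apply,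
      Submodule.Quotient.mk_eq_zero]
    exact ⟨Submodule.Quotient.mk x, mapQ_apply _ _ _ _⟩
  refine ⟨(LinearMap.ker f₃).liftQ φ hker ∘ₗ
    (f₃.quotKerEquivOfSurjective hf₃).symm.toLinearMap, ?_⟩
  rw [LinearMap.coe_comp, LinearEquiv.coe_coe, (LinearEquiv.surjective _).of_comp_iff,
    ← LinearMap.range_eq_top, range_liftQ, LinearMap.range_eq_top]
  exact (mkQ_surjective _).comp (mkQ_surjective _)

end DiagramChase

theorem stmt0_general {R : Type*} [CommRing R]
    (A₁ A₂ A₃ A₄ : Type*)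
    [AddCommGroup A₁] [AddCommGroup A₂] [AddCommGroup A₃] [AddCommGroup A₄]
    [Module R A₁] [Module R A₂] [Module R A₃] [Module R A₄]
    [Finite A₁] [Finite A₄]
    (f₁ : A₁ →ₗ[R] A₂) (f₂ : A₂ →ₗ[R] A₃) (f₃ : A₃ →ₗ[R] A₄)
    (hsurj : Function.Surjective f₃)
    (h12 : LinearMap.range f₁ = LinearMap.ker f₂)
    (h23 : LinearMap.range f₂ = LinearMap.ker f₃)
    (γ : R)
    (hcomp : (Ideal.span {γ} • ⊤ : Submodule R A₂) ≤ (Ideal.span {γ} • ⊤ : Submodule R A₃).comap f₂) :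
    (Finite (LinearMap.ker (Submodule.mapQ (Ideal.span {γ} • ⊤) (Ideal.span {γ} • ⊤) f₂ hcomp)) ∧
      Nat.card (LinearMap.ker (Submodule.mapQ (Ideal.span {γ} • ⊤) (Ideal.span {γ} • ⊤) f₂ hcomp)) ≤
        Nat.card A₁ * Nat.card A₄) ∧
    (Finite ((A₃ ⧸ (Ideal.span {γ} • ⊤ : Submodule R A₃)) ⧸
        LinearMap.range (Submodule.mapQ (Ideal.span {γ} • ⊤) (Ideal.span {γ} • ⊤) f₂ hcomp)) ∧
      Nat.card ((A₃ ⧸ (Ideal.span {γ} • ⊤ : Submodule R A₃)) ⧸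
        LinearMap.range (Submodule.mapQ (Ideal.span {γ} • ⊤) (Ideal.span {γ} • ⊤) f₂ hcomp)) ≤
        Nat.card A₁ * Nat.card A₄) := by
  have exact12 : Function.Exact f₁ f₂ := LinearMap.exact_iff.mpr h12.symm
  have exact23 : Function.Exact f₂ f₃ := LinearMap.exact_iff.mpr h23.symm
  obtain ⟨F, hF⟩ := exists_surjective_toKer_mapQ_smul exact12 exact23 hsurj γ hcomp
  obtain ⟨G, hG⟩ := exists_surjective_toCokernel_mapQ exact23 hsurj _ _ hcomp
  refine ⟨⟨.of_surjective F hF, ?_⟩, ⟨.of_surjective G hG, ?_⟩⟩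
  · calc _ ≤ Nat.card (A₁ × Submodule.torsionBy R A₄ γ) :=
          Nat.card_le_card_of_surjective F hF
      _ = Nat.card A₁ * Nat.card (Submodule.torsionBy R A₄ γ) := Nat.card_prod _ _
      _ ≤ Nat.card A₁ * Nat.card A₄ := Nat.mul_le_mul_left _ (Finite.card_subtype_le _)
  · calc _ ≤ Nat.card A₄ := Nat.card_le_card_of_surjective G hG
      _ ≤ Nat.card A₁ * Nat.card A₄ := Nat.le_mul_of_pos_left _ Nat.card_pos

/-- Let `0 → A₁ → A₂ → A₃ → A₄ → 0` be an exact sequence of `R`-modules with `A₁, A₄` finite.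
Then for any `γ ∈ R`, the kernel and cokernel of the induced map
`A₂/(γ·A₂) → A₃/(γ·A₃)` are finite of cardinality at most `|A₁|·|A₄|`. -/
theorem stmt0 {R : Type*} [CommRing R]
    (A₁ A₂ A₃ A₄ : Type*)
    [AddCommGroup A₁] [AddCommGroup A₂] [AddCommGroup A₃] [AddCommGroup A₄]
    [Module R A₁] [Module R A₂] [Module R A₃] [Module R A₄]
    [Finite A₁] [Finite A₄]
    (f₁ : A₁ →ₗ[R] A₂) (f₂ : A₂ →ₗ[R] A₃) (f₃ : A₃ →ₗ[R] A₄)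
    (hinj : Function.Injective f₁) (hsurj : Function.Surjective f₃)
    (h12 : LinearMap.range f₁ = LinearMap.ker f₂)
    (h23 : LinearMap.range f₂ = LinearMap.ker f₃)
    (γ : R)
    (hcomp : (Ideal.span {γ} • ⊤ : Submodule R A₂) ≤ (Ideal.span {γ} • ⊤ : Submodule R A₃).comap f₂) :
    (Finite (LinearMap.ker (Submodule.mapQ (Ideal.span {γ} • ⊤) (Ideal.span {γ} • ⊤) f₂ hcomp)) ∧
      Nat.card (LinearMap.ker (Submodule.mapQ (Ideal.span {γ} • ⊤) (Ideal.span {γ} • ⊤) f₂ hcomp)) ≤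
        Nat.card A₁ * Nat.card A₄) ∧
    (Finite ((A₃ ⧸ (Ideal.span {γ} • ⊤ : Submodule R A₃)) ⧸
        LinearMap.range (Submodule.mapQ (Ideal.span {γ} • ⊤) (Ideal.span {γ} • ⊤) f₂ hcomp)) ∧
      Nat.card ((A₃ ⧸ (Ideal.span {γ} • ⊤ : Submodule R A₃)) ⧸
        LinearMap.range (Submodule.mapQ (Ideal.span {γ} • ⊤) (Ideal.span {γ} • ⊤) f₂ hcomp)) ≤
        Nat.card A₁ * Nat.card A₄) :=
  stmt0_general A₁ A₂ A₃ A₄ f₁ f₂ f₃ hsurj h12 h23 γ hcomp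
end

section
/- Let p be a prime and let J(X) = b₁X + b₂X² + ⋯ + b_dX^d ∈ ℚ_p[X] be a polynomial with zero constant term such that pⁱ·bᵢ ∈ pℤ_p for all i = 1,…,d. Let φ: ℚ_p[[X]] → ℚ_p[[X]] be the substitution operator defined by φ(f)(X) = f(φ(X)) for a fixed φ(X) ∈ Xℤ_p[[X]] with φ(X) ≡ X^p mod p. Then the series l(X) = Σ_{k≥0} (−1)^k (J(φ))^k ∘ X converges coefficientwise in ℚ_p[[X]], i.e. l(X) is a well-defined power series. -/
open PowerSeries

/-- Substitution `f(g(X))` of a power series `g` with zero constant term into `f`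
(for `g` with `constantCoeff g = 0` this is the usual composition). -/
noncomputable def pcomp {R : Type*} [CommSemiring R] (f g : PowerSeries R) : PowerSeries R :=
  PowerSeries.mk fun m => ∑ k ∈ Finset.range (m + 1),
    PowerSeries.coeff k f * PowerSeries.coeff m (g ^ k)

/-- The iterates `φ^{(k)}(X)`: `φiter φ 0 = X` and `φiter φ (k+1) = φ(φ^{(k)}(X))`. -/
noncomputable def φiter {R : Type*} [CommSemiring R] (φ : PowerSeries R) : ℕ → PowerSeries R
  | 0 => PowerSeries.X
  | k + 1 => pcomp φ (φiter φ k)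

/-- The operator `J(φ)`: `f ↦ b₁ f(φ(X)) + ⋯ + b_d f(φ^{(d)}(X))`. -/
noncomputable def Jop {R : Type*} [CommSemiring R] (d : ℕ) (b : ℕ → R) (φ : PowerSeries R)
    (f : PowerSeries R) : PowerSeries R :=
  ∑ i ∈ Finset.Icc 1 d, PowerSeries.C (b i) * pcomp f (φiter φ i)


/-! Coefficient bounds that grow linearly are contracted by `J(φ)`: if `|fⱼ| ≤ c j` for all `j`,
then `|J(φ)(f)ₘ| ≤ c m / p`. Indeed `φ ≡ X^p mod p` gives `|(φʲ)ₘ| ≤ m / (j p)`, and feeding this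
into the substitution `φ^{(i+1)}(X)ʲ = φʲ(φ^{(i)}(X))` gains one factor `p` per iterate, so
`|(φ^{(i)}(X)ʲ)ₘ| ≤ m / (j pⁱ)`; this beats `|bᵢ| ≤ p^{i-1}`. Hence `|(J(φ)ᵏ X)ₘ| ≤ m p⁻ᵏ`, and
in the complete ultrametric field `ℚ_p` a series whose terms tend to zero converges. -/

open Finset IsUltrametricDist

section Composition

variable {R : Type*} [CommRing R]

lemma coeff_pow_eq_zero_of_lt {g : PowerSeries R} (hg : constantCoeff g = 0) {m k : ℕ}
    (h : m < k) : coeff m (g ^ k) = 0 :=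
  coeff_of_lt_order m <| (Nat.cast_lt.mpr h).trans_le (le_order_pow_of_constantCoeff_eq_zero k hg)

lemma constantCoeff_pcomp (f g : PowerSeries R) : constantCoeff (pcomp f g) = constantCoeff f := by
  simp only [← coeff_zero_eq_constantCoeff_apply, pcomp, coeff_mk]
  simp

lemma pcomp_eq_subst {g : PowerSeries R} (hg : constantCoeff g = 0) (f : PowerSeries R) :
    pcomp f g = f.subst g := by
  ext m
  rw [coeff_subst' (HasSubst.of_constantCoeff_zero' hg), pcomp, coeff_mk]
  refine (finsum_eq_sum_of_support_subset _ fun k hk => ?_).symm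
  rw [coe_range, Set.mem_Iio, Nat.lt_succ_iff]
  by_contra! hmk
  exact hk (by simp [coeff_pow_eq_zero_of_lt hg hmk])

lemma pcomp_pow {g : PowerSeries R} (hg : constantCoeff g = 0) (f : PowerSeries R) (j : ℕ) :
    pcomp (f ^ j) g = pcomp f g ^ j := by
  rw [pcomp_eq_subst hg, pcomp_eq_subst hg, subst_pow (HasSubst.of_constantCoeff_zero' hg)]

lemma constantCoeff_φiter {φ : PowerSeries R} (hφ0 : constantCoeff φ = 0) :
    ∀ i, constantCoeff (φiter φ i) = 0
  | 0 => constantCoeff_X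
  | _ + 1 => (constantCoeff_pcomp _ _).trans hφ0

end Composition

lemma norm_coeff_X_pow_le_one {R : Type*} [NormedRing R] [NormOneClass R] (k m : ℕ) :
    ‖coeff m ((X : PowerSeries R) ^ k)‖ ≤ 1 := by
  rw [coeff_X_pow]
  split_ifs <;> simp

section Ultrametric

variable {R : Type*} [NormedCommRing R] [IsUltrametricDist R]

lemma norm_coeff_mul_le {f g : PowerSeries R} {A B : ℝ} (hf : ∀ m, ‖coeff m f‖ ≤ A)
    (hg : ∀ m, ‖coeff m g‖ ≤ B) (m : ℕ) : ‖coeff m (f * g)‖ ≤ A * B := by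
  have hA : 0 ≤ A := (norm_nonneg _).trans (hf 0)
  have hB : 0 ≤ B := (norm_nonneg _).trans (hg 0)
  rw [coeff_mul]
  refine norm_sum_le_of_forall_le_of_nonneg (mul_nonneg hA hB) fun uv _ => ?_
  exact (norm_mul_le _ _).trans (mul_le_mul (hf _) (hg _) (norm_nonneg _) hA)

lemma norm_coeff_pow_le_one [NormOneClass R] {f : PowerSeries R} (hf : ∀ m, ‖coeff m f‖ ≤ 1)
    (j m : ℕ) : ‖coeff m (f ^ j)‖ ≤ 1 := by
  induction j generalizing m with
  | zero => simpa using norm_coeff_X_pow_le_one 0 m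
  | succ j ih => simpa [pow_succ] using norm_coeff_mul_le ih hf m

lemma norm_coeff_pow_sub_X_pow_le [NormOneClass R] {φ : PowerSeries R} {n : ℕ} {ε : ℝ}
    (hφint : ∀ m, ‖coeff m φ‖ ≤ 1) (hφn : ∀ m, ‖coeff m (φ - X ^ n)‖ ≤ ε) (j m : ℕ) :
    ‖coeff m (φ ^ j - X ^ (n * j))‖ ≤ ε := by
  induction j generalizing m with
  | zero => simpa using (norm_nonneg _).trans (hφn 0)
  | succ j ih =>
    have key : φ ^ (j + 1) - X ^ (n * (j + 1)) =
        φ * (φ ^ j - X ^ (n * j)) + (φ - X ^ n) * X ^ (n * j) := by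
      rw [mul_add_one n j, pow_add]
      ring
    rw [key, map_add]
    refine (norm_add_le_max _ _).trans (max_le ?_ ?_)
    · simpa using norm_coeff_mul_le hφint ih m
    · simpa using norm_coeff_mul_le hφn (norm_coeff_X_pow_le_one _) m

lemma norm_coeff_pcomp_le {f g : PowerSeries R} {c q : ℝ} (hq : 0 ≤ q)
    (hf : ∀ j, ‖coeff j f‖ ≤ c * j) (hg : ∀ j : ℕ, 1 ≤ j → ∀ m, ‖coeff m (g ^ j)‖ ≤ m / (j * q))
    (m : ℕ) : ‖coeff m (pcomp f g)‖ ≤ c * m / q := by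
  have hc : 0 ≤ c := by simpa using (norm_nonneg _).trans (hf 1)
  rw [pcomp, coeff_mk]
  refine norm_sum_le_of_forall_le_of_nonneg (by positivity) fun j _ => ?_
  rcases Nat.eq_zero_or_pos j with rfl | hj
  · have : coeff 0 f = 0 := norm_le_zero_iff.mp (by simpa using hf 0)
    simp only [this, zero_mul, norm_zero]
    positivity
  · calc ‖coeff j f * coeff m (g ^ j)‖ ≤ c * j * (m / (j * q)) :=
          (norm_mul_le _ _).trans (mul_le_mul (hf j) (hg j hj m) (norm_nonneg _) (by positivity))
      _ = c * m / q := by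
          have : (j : ℝ) ≠ 0 := by positivity
          rw [mul_div_assoc', mul_right_comm, mul_comm (j : ℝ) q, mul_div_mul_right _ _ this]

end Ultrametric

section Frobenius

variable {R : Type*} [NormedCommRing R] [IsUltrametricDist R] [NormOneClass R]
  {φ : PowerSeries R} {n : ℕ}

lemma norm_coeff_pow_le_div (hφ0 : constantCoeff φ = 0) (hφint : ∀ m, ‖coeff m φ‖ ≤ 1)
    (hφn : ∀ m, ‖coeff m (φ - X ^ n)‖ ≤ (n : ℝ)⁻¹) {j : ℕ} (hj : 1 ≤ j) (m : ℕ) :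
    ‖coeff m (φ ^ j)‖ ≤ m / (j * n) := by
  rcases lt_or_ge m j with hmj | hjm
  · rw [coeff_pow_eq_zero_of_lt hφ0 hmj, norm_zero]
    positivity
  have hj0 : (j : ℝ) ≠ 0 := by positivity
  rcases eq_or_ne m (n * j) with rfl | hne
  · have hn : (n : ℝ) ≠ 0 := by
      rintro hn
      simp only [Nat.cast_eq_zero.mp hn, zero_mul] at hjm
      omega
    calc ‖coeff (n * j) (φ ^ j)‖ ≤ 1 := norm_coeff_pow_le_one hφint j _
      _ = (n * j : ℕ) / (j * n) := by push_cast; field_simp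
  · calc ‖coeff m (φ ^ j)‖ = ‖coeff m (φ ^ j - X ^ (n * j))‖ := by
          rw [map_sub, coeff_X_pow, if_neg hne, sub_zero]
      _ ≤ (n : ℝ)⁻¹ := norm_coeff_pow_sub_X_pow_le hφint hφn j m
      _ ≤ (m / j) * (n : ℝ)⁻¹ := by
          refine le_mul_of_one_le_left (by positivity) ?_
          rw [one_le_div (by positivity)]
          exact_mod_cast hjm
      _ = m / (j * n) := by rw [div_mul_eq_div_div, div_eq_mul_inv _ (n : ℝ)]

lemma norm_coeff_φiter_pow_le (hφ0 : constantCoeff φ = 0) (hφint : ∀ m, ‖coeff m φ‖ ≤ 1)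
    (hφn : ∀ m, ‖coeff m (φ - X ^ n)‖ ≤ (n : ℝ)⁻¹) (i : ℕ) {j : ℕ} (hj : 1 ≤ j) (m : ℕ) :
    ‖coeff m (φiter φ i ^ j)‖ ≤ m / (j * n ^ i) := by
  induction i generalizing j m with
  | zero =>
    rw [φiter, coeff_X_pow, pow_zero, mul_one]
    split_ifs with hmj
    · subst hmj
      rw [norm_one, div_self (by positivity)]
    · rw [norm_zero]
      positivity
  | succ i ih =>
    rw [φiter, ← pcomp_pow (constantCoeff_φiter hφ0 i)]
    calc ‖coeff m (pcomp (φ ^ j) (φiter φ i))‖ ≤ (j * n : ℝ)⁻¹ * m / n ^ i :=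
          norm_coeff_pcomp_le (by positivity)
            (fun r => by rw [inv_mul_eq_div]; exact norm_coeff_pow_le_div hφ0 hφint hφn hj r)
            (fun r hr => ih hr) m
      _ = m / (j * n ^ (i + 1)) := by rw [pow_succ]; ring

end Frobenius

section Padic

variable {p : ℕ} [Fact p.Prime] {d : ℕ} {b : ℕ → ℚ_[p]} {φ : PowerSeries ℚ_[p]}

lemma norm_le_of_norm_prime_pow_mul_le {i : ℕ} {x : ℚ_[p]}
    (hx : ‖(p : ℚ_[p]) ^ i * x‖ ≤ (p : ℝ)⁻¹) : ‖x‖ ≤ p ^ i / p := by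
  have hp : (0 : ℝ) < p := by exact_mod_cast (Fact.out : p.Prime).pos
  rw [norm_mul, norm_pow, Padic.norm_p, inv_pow, inv_mul_le_iff₀ (by positivity)] at hx
  rwa [div_eq_mul_inv]

lemma norm_coeff_Jop_le (hφ0 : constantCoeff φ = 0) (hφint : ∀ m, ‖coeff m φ‖ ≤ 1)
    (hφp : ∀ m, ‖coeff m (φ - X ^ p)‖ ≤ (p : ℝ)⁻¹)
    (hb : ∀ i, 1 ≤ i → i ≤ d → ‖(p : ℚ_[p]) ^ i * b i‖ ≤ (p : ℝ)⁻¹)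
    {f : PowerSeries ℚ_[p]} {c : ℝ} (hf : ∀ j, ‖coeff j f‖ ≤ c * j) (m : ℕ) :
    ‖coeff m (Jop d b φ f)‖ ≤ c * m / p := by
  have hp : (0 : ℝ) < p := by exact_mod_cast (Fact.out : p.Prime).pos
  have hc : 0 ≤ c := by simpa using (norm_nonneg _).trans (hf 1)
  rw [Jop, map_sum]
  refine norm_sum_le_of_forall_le_of_nonneg (by positivity) fun i hi => ?_
  obtain ⟨hi1, hid⟩ := mem_Icc.mp hi
  have hpi : (0 : ℝ) < (p : ℝ) ^ i := by positivity
  rw [coeff_C_mul, norm_mul]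
  calc ‖b i‖ * ‖coeff m (pcomp f (φiter φ i))‖ ≤ p ^ i / p * (c * m / p ^ i) :=
        mul_le_mul (norm_le_of_norm_prime_pow_mul_le (hb i hi1 hid))
          (norm_coeff_pcomp_le hpi.le hf
            (fun j hj => norm_coeff_φiter_pow_le hφ0 hφint hφp i hj) m)
          (norm_nonneg _) (by positivity)
    _ = c * m / p := by field_simp

lemma norm_coeff_iterate_Jop_X_le (hφ0 : constantCoeff φ = 0) (hφint : ∀ m, ‖coeff m φ‖ ≤ 1)
    (hφp : ∀ m, ‖coeff m (φ - X ^ p)‖ ≤ (p : ℝ)⁻¹)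
    (hb : ∀ i, 1 ≤ i → i ≤ d → ‖(p : ℚ_[p]) ^ i * b i‖ ≤ (p : ℝ)⁻¹) (k m : ℕ) :
    ‖coeff m ((Jop d b φ)^[k] X)‖ ≤ (p : ℝ)⁻¹ ^ k * m := by
  induction k generalizing m with
  | zero =>
    rw [Function.iterate_zero_apply, pow_zero, one_mul, coeff_X]
    split_ifs with hm
    · simp [hm]
    · simp
  | succ k ih =>
    rw [Function.iterate_succ_apply', pow_succ]
    calc ‖coeff m (Jop d b φ ((Jop d b φ)^[k] X))‖ ≤ (p : ℝ)⁻¹ ^ k * m / p :=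
          norm_coeff_Jop_le hφ0 hφint hφp hb ih m
      _ = (p : ℝ)⁻¹ ^ k * (p : ℝ)⁻¹ * m := by ring

end Padic

theorem stmt1_general (p : ℕ) [Fact p.Prime] (d : ℕ)
    (b : ℕ → ℚ_[p])
    (hb : ∀ i, 1 ≤ i → i ≤ d → ‖(p : ℚ_[p]) ^ i * b i‖ ≤ (p : ℝ)⁻¹)
    (φ : PowerSeries ℚ_[p])
    (hφ0 : PowerSeries.constantCoeff φ = 0)
    (hφint : ∀ k, ‖PowerSeries.coeff k φ‖ ≤ 1)
    (hφp : ∀ k, ‖PowerSeries.coeff k (φ - PowerSeries.X ^ p)‖ ≤ (p : ℝ)⁻¹) :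
    ∃ l : PowerSeries ℚ_[p], ∀ m : ℕ,
      Filter.Tendsto
        (fun N => PowerSeries.coeff m
          (∑ k ∈ Finset.range N, ((-1 : ℚ_[p]) ^ k) • ((Jop d b φ)^[k] PowerSeries.X)))
        Filter.atTop (nhds (PowerSeries.coeff m l)) := by
  set a : ℕ → ℕ → ℚ_[p] := fun m k => (-1) ^ k * coeff m ((Jop d b φ)^[k] X)
  have hp : (p : ℝ)⁻¹ < 1 := inv_lt_one_of_one_lt₀ (by exact_mod_cast (Fact.out : p.Prime).one_lt)
  have ha_tendsto (m : ℕ) : Filter.Tendsto (a m) Filter.cofinite (nhds 0) := by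
    rw [Nat.cofinite_eq_atTop]
    refine squeeze_zero_norm (fun k => ?_)
      (by simpa using (tendsto_pow_atTop_nhds_zero_of_lt_one (by positivity) hp).mul_const (m : ℝ))
    simpa [a] using norm_coeff_iterate_Jop_X_le hφ0 hφint hφp hb k m
  have ha_summable (m : ℕ) : Summable (a m) :=
    NonarchimedeanAddGroup.summable_of_tendsto_cofinite_zero (ha_tendsto m)
  refine ⟨mk fun m => ∑' k, a m k, fun m => ?_⟩
  simpa [coeff_mk, map_sum, a] using (ha_summable m).hasSum.tendsto_sum_nat

/-- Let `J(X) = b₁X + ⋯ + b_dX^d ∈ ℚ_p[X]` with `pⁱbᵢ ∈ pℤ_p` and let `φ` be the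
substitution operator for some `φ(X) ∈ Xℤ_p[[X]]` with `φ(X) ≡ X^p mod p`. Then the series
`l(X) = Σ_{k≥0} (−1)^k (J(φ))^k ∘ X` converges coefficientwise in `ℚ_p[[X]]`. -/
theorem stmt1 (p : ℕ) [Fact p.Prime] (d : ℕ) (hd : 1 ≤ d)
    (b : ℕ → ℚ_[p])
    (hb : ∀ i, 1 ≤ i → i ≤ d → ‖(p : ℚ_[p]) ^ i * b i‖ ≤ (p : ℝ)⁻¹)
    (φ : PowerSeries ℚ_[p])
    (hφ0 : PowerSeries.constantCoeff φ = 0)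
    (hφint : ∀ k, ‖PowerSeries.coeff k φ‖ ≤ 1)
    (hφp : ∀ k, ‖PowerSeries.coeff k (φ - PowerSeries.X ^ p)‖ ≤ (p : ℝ)⁻¹) :
    ∃ l : PowerSeries ℚ_[p], ∀ m : ℕ,
      Filter.Tendsto
        (fun N => PowerSeries.coeff m
          (∑ k ∈ Finset.range N, ((-1 : ℚ_[p]) ^ k) • ((Jop d b φ)^[k] PowerSeries.X)))
        Filter.atTop (nhds (PowerSeries.coeff m l)) :=
  stmt1_general p d b hb φ hφ0 hφint hφp
end

section
/- With notation as above, let H(X) = X^d + a_{d−1}X^{d−1} + ⋯ + a₀ ∈ ℤ_p[X] with p | aᵢ for all i, set bᵢ = aᵢ/a₀ (with a_d = 1), J(X) = b₁X + ⋯ + b_dX^d, and l(X) = Σ_{k≥0}(−1)^k (J(φ))^k ∘ X. Then (1 + J(φ)) ∘ l(X) = X, and consequently H(φ) ∘ l(X) = a₀ · X. -/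
/-! The partial sums `S N` of `l = ∑ (-J(φ))^k X` telescope: `S (N+1) + J(φ) (S N) = X`.
Each coefficient of `f(g(X))` depends on finitely many coefficients of `f`, so `J(φ)` commutes
with coefficientwise limits and the identity passes to `l`. Finally `aᵢ = a₀ bᵢ` gives
`H(φ) = a₀ (1 + J(φ))`. -/

open PowerSeries

open Filter Topology

section Composition

variable {R : Type*} [CommSemiring R]

lemma coeff_pcomp (m : ℕ) (f g : PowerSeries R) :
    coeff m (pcomp f g) = ∑ k ∈ Finset.range (m + 1), coeff k f * coeff m (g ^ k) :=
  coeff_mk _ _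

lemma pcomp_X (f : PowerSeries R) : pcomp f X = f := by
  ext m
  rw [coeff_pcomp, Finset.sum_eq_single_of_mem m (Finset.self_mem_range_succ m)]
  · simp [coeff_X_pow]
  · intro k _ hk
    simp [coeff_X_pow, Ne.symm hk]

lemma pcomp_add (f g h : PowerSeries R) : pcomp (f + g) h = pcomp f h + pcomp g h := by
  ext m
  simp [coeff_pcomp, add_mul, Finset.sum_add_distrib]

lemma pcomp_smul (c : R) (f g : PowerSeries R) : pcomp (c • f) g = c • pcomp f g := by
  ext m
  simp [coeff_pcomp, Finset.mul_sum, mul_assoc]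

lemma tendsto_coeff_pcomp [TopologicalSpace R] [IsTopologicalSemiring R] {ι : Type*}
    {F : Filter ι} {f : ι → PowerSeries R} {l : PowerSeries R}
    (hf : ∀ m, Tendsto (fun i => coeff m (f i)) F (𝓝 (coeff m l))) (g : PowerSeries R) (m : ℕ) :
    Tendsto (fun i => coeff m (pcomp (f i) g)) F (𝓝 (coeff m (pcomp l g))) := by
  simp only [coeff_pcomp]
  exact tendsto_finsetSum _ fun k _ => (hf k).mul_const _

end Composition

section Jop

variable {R : Type*} [CommSemiring R] (d : ℕ) (b : ℕ → R) (φ : PowerSeries R)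

noncomputable def Jopₗ : PowerSeries R →ₗ[R] PowerSeries R where
  toFun := Jop d b φ
  map_add' f g := by simp [Jop, pcomp_add, mul_add, Finset.sum_add_distrib]
  map_smul' c f := by simp [Jop, pcomp_smul, Finset.smul_sum]

lemma tendsto_coeff_Jop [TopologicalSpace R] [IsTopologicalSemiring R] {ι : Type*}
    {F : Filter ι} {f : ι → PowerSeries R} {l : PowerSeries R}
    (hf : ∀ m, Tendsto (fun i => coeff m (f i)) F (𝓝 (coeff m l))) (m : ℕ) :
    Tendsto (fun i => coeff m (Jop d b φ (f i))) F (𝓝 (coeff m (Jop d b φ l))) := by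
  simp only [Jop, map_sum, coeff_C_mul]
  exact tendsto_finsetSum _ fun i _ => (tendsto_coeff_pcomp hf _ m).const_mul _

lemma sum_C_mul_pcomp_φiter (a : ℕ → R) (hab : ∀ i, a i = a 0 * b i) (f : PowerSeries R) :
    ∑ i ∈ Finset.range (d + 1), C (a i) * pcomp f (φiter φ i) =
      C (a 0) * (f + Jop d b φ f) := by
  rw [Finset.sum_range_succ', mul_add, Jop, Finset.mul_sum, ← Finset.Ico_add_one_right_eq_Icc,
    Finset.sum_Ico_eq_sum_range, add_comm]
  congr 1
  · exact congrArg _ (pcomp_X f)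
  · refine Finset.sum_congr rfl fun i _ => ?_
    rw [← mul_assoc, ← map_mul, add_comm 1 i, ← hab]

end Jop

lemma neumann_partial_sum_succ_add {R M : Type*} [Ring R] [AddCommGroup M] [Module R M]
    (T : M →ₗ[R] M) (x : M) (N : ℕ) :
    ∑ k ∈ Finset.range (N + 1), (-1 : R) ^ k • T^[k] x +
      T (∑ k ∈ Finset.range N, (-1 : R) ^ k • T^[k] x) = x := by
  rw [Finset.sum_range_succ', map_sum, add_comm _ ((-1 : R) ^ 0 • T^[0] x), add_assoc,
    ← Finset.sum_add_distrib]
  simp [Function.iterate_succ_apply', pow_succ]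

theorem add_Jop_eq_X_of_tendsto {R : Type*} [CommRing R] [TopologicalSpace R]
    [IsTopologicalRing R] [T2Space R] (d : ℕ) (b : ℕ → R) (φ l : PowerSeries R)
    (hl : ∀ m : ℕ, Tendsto
      (fun N => coeff m (∑ k ∈ Finset.range N, ((-1 : R) ^ k) • ((Jop d b φ)^[k] X)))
      atTop (𝓝 (coeff m l))) :
    l + Jop d b φ l = X := by
  ext m
  have hshift := (hl m).comp (tendsto_add_atTop_nat 1)
  have hJ := tendsto_coeff_Jop d b φ hl m
  have hJ' : Tendsto (fun N => coeff m (Jop d b φ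
      (∑ k ∈ Finset.range N, ((-1 : R) ^ k) • ((Jop d b φ)^[k] X)))) atTop
      (𝓝 (coeff m X - coeff m l)) := by
    refine (tendsto_const_nhds.sub hshift).congr fun N => ?_
    rw [Function.comp_apply, ← map_sub]
    exact congrArg _ (eq_sub_of_add_eq' (neumann_partial_sum_succ_add (Jopₗ d b φ) X N)).symm
  rw [map_add, tendsto_nhds_unique hJ hJ']
  ring

theorem stmt2_general (p : ℕ) [Fact p.Prime] (d : ℕ)
    (a : ℕ → ℚ_[p]) (ha0 : a 0 ≠ 0)
    (b : ℕ → ℚ_[p]) (hb : ∀ i, b i = a i / a 0)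
    (φ : PowerSeries ℚ_[p])
    (l : PowerSeries ℚ_[p])
    (hl : ∀ m : ℕ,
      Filter.Tendsto
        (fun N => PowerSeries.coeff m
          (∑ k ∈ Finset.range N, ((-1 : ℚ_[p]) ^ k) • ((Jop d b φ)^[k] PowerSeries.X)))
        Filter.atTop (nhds (PowerSeries.coeff m l))) :
    l + Jop d b φ l = PowerSeries.X ∧
    ∑ i ∈ Finset.range (d + 1), PowerSeries.C (a i) * pcomp l (φiter φ i) =
      PowerSeries.C (a 0) * PowerSeries.X := by
  have hab : ∀ i, a i = a 0 * b i := fun i => by rw [hb, mul_div_cancel₀ _ ha0]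
  have h1 := add_Jop_eq_X_of_tendsto d b φ l hl
  exact ⟨h1, by rw [sum_C_mul_pcomp_φiter d b φ a hab, h1]⟩

/-- Let `H(X) = X^d + a_{d−1}X^{d−1} + ⋯ + a₀ ∈ ℤ_p[X]` with `p | aᵢ`, `bᵢ = aᵢ/a₀`
(`a_d = 1`), `J(X) = b₁X + ⋯ + b_dX^d`, and `l(X) = Σ_{k≥0}(−1)^k(J(φ))^k ∘ X` (the
coefficientwise limit). Then `(1 + J(φ)) ∘ l(X) = X` and `H(φ) ∘ l(X) = a₀ · X`. -/
theorem stmt2 (p : ℕ) [Fact p.Prime] (d : ℕ) (hd : 1 ≤ d)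
    (a : ℕ → ℚ_[p]) (ha0 : a 0 ≠ 0) (had : a d = 1)
    (haint : ∀ i ≤ d, ‖a i‖ ≤ 1) (hap : ∀ i < d, ‖a i‖ ≤ (p : ℝ)⁻¹)
    (b : ℕ → ℚ_[p]) (hb : ∀ i, b i = a i / a 0)
    (φ : PowerSeries ℚ_[p])
    (hφ0 : PowerSeries.constantCoeff φ = 0)
    (hφint : ∀ k, ‖PowerSeries.coeff k φ‖ ≤ 1)
    (hφp : ∀ k, ‖PowerSeries.coeff k (φ - PowerSeries.X ^ p)‖ ≤ (p : ℝ)⁻¹)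
    (l : PowerSeries ℚ_[p])
    (hl : ∀ m : ℕ,
      Filter.Tendsto
        (fun N => PowerSeries.coeff m
          (∑ k ∈ Finset.range N, ((-1 : ℚ_[p]) ^ k) • ((Jop d b φ)^[k] PowerSeries.X)))
        Filter.atTop (nhds (PowerSeries.coeff m l))) :
    l + Jop d b φ l = PowerSeries.X ∧
    ∑ i ∈ Finset.range (d + 1), PowerSeries.C (a i) * pcomp l (φiter φ i) =
      PowerSeries.C (a 0) * PowerSeries.X :=
  stmt2_general p d a ha0 b hb φ l hl
end

section
/- In the setting of the Lubin–Tate tower above, with J(X) = b₁X + ⋯ + b_dX^d (pⁱbᵢ ∈ pℤ_p) and l(X) = Σ_{k≥0}(−1)^k(J(φ))^k ∘ X, for every n large enough that all terms are defined, one has Tr_{ℚ_p(π_n)/ℚ_p(π_{n−1})} l(π_n) = −α_{p−1} − p·(b₁ l(π_{n−1}) + b₂ l(π_{n−2}) + ⋯ + b_d l(π_{n−d})). -/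
/-!
Write `ℓ(n+1) = π_{n+1} − S` with `S = Σᵢ bᵢ ℓ(n+1−i) ∈ ℚ_p(π_n)`. The polynomial
`(φ / X) ∘ φ^{∘m}` has `π_{m+1}` as a root and is Eisenstein over `ℤ_p` (it reduces to a power
of `X` and its constant term is `α₁`), so `[ℚ_p(π_{m+1}) : ℚ_p] = (p − 1)pᵐ`. Hence
`[ℚ_p(π_{n+1}) : ℚ_p(π_n)] = p`, and `φ(X) − π_n` is the minimal polynomial of `π_{n+1}` over
`ℚ_p(π_n)`: the trace of `π_{n+1}` is `−α_{p−1}`, that of `S` is `p S`.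
-/

open IntermediateField Polynomial

set_option synthInstance.maxHeartbeats 1000000
set_option maxHeartbeats 1000000

/-- The trace map between two intermediate fields `E ≤ F`. -/
noncomputable def relTrace {K Ω : Type*} [Field K] [Field Ω] [Algebra K Ω]
    {E F : IntermediateField K Ω} (h : E ≤ F) (x : F) : E :=
  letI : Algebra E F := (IntermediateField.inclusion h).toRingHom.toAlgebra
  Algebra.trace E F x

open Module

namespace Polynomial

section Semiring

variable {R S : Type*} [Semiring R] [Semiring S]

theorem degree_sum_Icc_C_mul_X_pow_lt (a : ℕ → R) (n : ℕ) :
    (∑ i ∈ Finset.Icc 1 (n - 1), C (a i) * X ^ i).degree < (n : WithBot ℕ) := by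
  refine (degree_sum_le _ _).trans_lt
    ((Finset.sup_lt_iff (by exact_mod_cast WithBot.bot_lt_coe n)).2 fun i hi ↦ ?_)
  have hin : i < n := by rw [Finset.mem_Icc] at hi; omega
  exact (degree_C_mul_X_pow_le _ _).trans_lt (by exact_mod_cast hin)

theorem monic_X_pow_add_sum_Icc (a : ℕ → R) (n : ℕ) :
    (X ^ n + ∑ i ∈ Finset.Icc 1 (n - 1), C (a i) * X ^ i).Monic :=
  monic_X_pow_add (degree_sum_Icc_C_mul_X_pow_lt a n)

theorem natDegree_X_pow_add_sum_Icc [Nontrivial R] (a : ℕ → R) (n : ℕ) :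
    (X ^ n + ∑ i ∈ Finset.Icc 1 (n - 1), C (a i) * X ^ i).natDegree = n := by
  rw [natDegree_add_eq_left_of_degree_lt, natDegree_X_pow]
  rw [degree_X_pow]
  exact degree_sum_Icc_C_mul_X_pow_lt a n

theorem coeff_X_pow_add_sum_Icc_of_lt (a : ℕ → R) {n i : ℕ} (hi : i < n) :
    (X ^ n + ∑ i ∈ Finset.Icc 1 (n - 1), C (a i) * X ^ i).coeff i = if 1 ≤ i then a i else 0 := by
  simp [coeff_X_pow, hi.ne, show i ≤ n - 1 by omega]

theorem map_divX (g : R →+* S) (f : R[X]) : (f.map g).divX = f.divX.map g := by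
  ext n
  simp only [coeff_divX, coeff_map]

theorem map_iterate_comp (g : R →+* S) (f q : R[X]) (k : ℕ) :
    (f.comp^[k] q).map g = (f.map g).comp^[k] (q.map g) := by
  induction k with
  | zero => rfl
  | succ k ih => rw [Function.iterate_succ_apply', Function.iterate_succ_apply', map_comp, ih]

theorem Monic.divX {f : R[X]} (hf : f.Monic) (h : f.natDegree ≠ 0) : f.divX.Monic := by
  change f.divX.coeff f.divX.natDegree = 1
  rw [natDegree_divX_eq_natDegree_tsub_one, coeff_divX, Nat.sub_add_cancel (Nat.pos_of_ne_zero h)]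
  exact hf

end Semiring

theorem natDegree_divX_comp_iterate {R : Type*} [CommRing R] [IsDomain R] (f : R[X]) (j : ℕ) :
    (f.divX.comp (f.comp^[j] X)).natDegree = (f.natDegree - 1) * f.natDegree ^ j := by
  rw [natDegree_comp, natDegree_divX_eq_natDegree_tsub_one, natDegree_iterate_comp, natDegree_X,
    mul_one]

namespace IsDistinguishedAt

variable {R : Type*} [CommRing R] {I : Ideal R} {f g : R[X]}

theorem of_map_eq_X_pow (hf : f.Monic) (h : f.map (Ideal.Quotient.mk I) = X ^ f.natDegree) :
    f.IsDistinguishedAt I where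
  monic := hf
  mem {n} hn := by
    simpa [coeff_X_pow, hn.ne, Ideal.Quotient.eq_zero_iff_mem] using congrArg (coeff · n) h

theorem divX (hf : f.IsDistinguishedAt I) (h : f.natDegree ≠ 0) : f.divX.IsDistinguishedAt I where
  monic := hf.monic.divX h
  mem {n} hn := by
    rw [coeff_divX]
    exact hf.mem (by rw [natDegree_divX_eq_natDegree_tsub_one] at hn; omega)

variable [IsDomain R]

theorem comp (hf : f.IsDistinguishedAt I) (hg : g.IsDistinguishedAt I) (hg0 : g.natDegree ≠ 0) :
    (f.comp g).IsDistinguishedAt I :=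
  of_map_eq_X_pow (hf.monic.comp hg.monic hg0) <| by
    rw [map_comp, hf.map_eq_X_pow, hg.map_eq_X_pow, X_pow_comp, ← pow_mul, natDegree_comp,
      mul_comm]

theorem iterate_comp_X (hf : f.IsDistinguishedAt I) (h : f.natDegree ≠ 0) (j : ℕ) :
    (f.comp^[j] X).IsDistinguishedAt I := by
  induction j with
  | zero => exact of_map_eq_X_pow monic_X (by simp)
  | succ j ih =>
    rw [Function.iterate_succ_apply']
    exact hf.comp ih (by simp [h])

theorem divX_comp_iterate (hf : f.IsDistinguishedAt I) (h : f.natDegree ≠ 0) (j : ℕ) :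
    (f.divX.comp (f.comp^[j] X)).IsDistinguishedAt I :=
  (hf.divX h).comp (hf.iterate_comp_X h j) (by simp [h])

theorem isEisensteinAt_divX_comp_iterate (hf : f.IsDistinguishedAt I) (h : f.natDegree ≠ 0)
    (hI : I ≠ ⊤) (h0 : f.coeff 0 = 0) (h1 : f.coeff 1 ∉ I ^ 2) (j : ℕ) :
    (f.divX.comp (f.comp^[j] X)).IsEisensteinAt I := by
  have hΦ := hf.divX_comp_iterate h j
  refine hΦ.monic.isEisensteinAt_of_mem_of_notMem hI hΦ.mem ?_
  have hfix : f.eval 0 = 0 := by rw [← coeff_zero_eq_eval_zero, h0]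
  rwa [coeff_zero_eq_eval_zero, eval_comp, iterate_comp_eval, eval_X,
    Function.iterate_fixed hfix, ← coeff_zero_eq_eval_zero, coeff_divX]

end IsDistinguishedAt

end Polynomial

open IsLocalRing in
theorem irreducible_divX_comp_iterate_of_norm_coeff {p : ℕ} [Fact p.Prime] {φ : ℚ_[p][X]} (hφ : φ.Monic)
    (h2 : 2 ≤ φ.natDegree) (hcoeff : ∀ i < φ.natDegree, ‖φ.coeff i‖ < 1) (h0 : φ.coeff 0 = 0)
    (h1 : ‖φ.coeff 1‖ = (p : ℝ)⁻¹) (j : ℕ) : Irreducible (φ.divX.comp (φ.comp^[j] X)) := by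
  have hlift : φ ∈ lifts (algebraMap ℤ_[p] ℚ_[p]) := by
    refine (lifts_iff_coeff_lifts φ).2 fun i ↦ ⟨⟨φ.coeff i, ?_⟩, rfl⟩
    rcases lt_trichotomy i φ.natDegree with hi | rfl | hi
    · exact (hcoeff i hi).le
    · simp [hφ.coeff_natDegree]
    · simp [coeff_eq_zero_of_natDegree_lt hi]
  obtain ⟨f, rfl, hfdeg, hfm⟩ := lifts_and_natDegree_eq_and_monic hlift hφ
  have hnorm (i : ℕ) : ‖(f.map (algebraMap ℤ_[p] ℚ_[p])).coeff i‖ = ‖f.coeff i‖ := by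
    rw [coeff_map]; rfl
  rw [← hfdeg] at hcoeff h2
  simp only [hnorm] at hcoeff h1
  have hf : f.IsDistinguishedAt (maximalIdeal ℤ_[p]) :=
    ⟨⟨fun hi ↦ PadicInt.mem_nonunits.2 (hcoeff _ hi)⟩, hfm⟩
  have hf0 : f.coeff 0 = 0 := by
    rw [← norm_eq_zero, ← hnorm, h0, norm_zero]
  have hf1 : f.coeff 1 ∉ maximalIdeal ℤ_[p] ^ 2 := by
    rw [PadicInt.maximalIdeal_eq_span_p, Ideal.span_singleton_pow,
      ← PadicInt.norm_le_pow_iff_mem_span_pow, h1, not_le, zpow_neg, zpow_natCast]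
    have hp : (1 : ℝ) < p := by exact_mod_cast (Fact.out : p.Prime).one_lt
    exact inv_strictAnti₀ (by positivity) (by nlinarith)
  have hΦ := hf.divX_comp_iterate (by omega) j
  have hΦdeg : 0 < (f.divX.comp (f.comp^[j] X)).natDegree := by
    rw [natDegree_divX_comp_iterate]
    exact Nat.mul_pos (by omega) (by positivity)
  have hirr := (hf.isEisensteinAt_divX_comp_iterate (by omega) (maximalIdeal.isMaximal _).ne_top
    hf0 hf1 j).irreducible (maximalIdeal.isMaximal _).isPrime hΦ.monic.isPrimitive hΦdeg
  rw [map_divX, ← map_X (algebraMap ℤ_[p] ℚ_[p]), ← map_iterate_comp, ← map_comp]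
  exact (hΦ.monic.irreducible_iff_irreducible_map_fraction_map).1 hirr

theorem irreducible_divX_comp_iterate_of_eq_X_pow_add_sum {p : ℕ} [Fact p.Prime]
    {α : ℕ → ℚ_[p]} (hαint : ∀ i, 1 ≤ i → i ≤ p - 1 → ‖α i‖ ≤ (p : ℝ)⁻¹)
    (hα1 : ‖α 1‖ = (p : ℝ)⁻¹) {φ : ℚ_[p][X]}
    (hφ : φ = X ^ p + ∑ i ∈ Finset.Icc 1 (p - 1), C (α i) * X ^ i) (j : ℕ) :
    Irreducible (φ.divX.comp (φ.comp^[j] X)) := by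
  have hp2 : 2 ≤ p := (Fact.out : p.Prime).two_le
  have hdeg : φ.natDegree = p := hφ ▸ natDegree_X_pow_add_sum_Icc α p
  have hcoeff (i : ℕ) (hi : i < p) : φ.coeff i = if 1 ≤ i then α i else 0 :=
    hφ ▸ coeff_X_pow_add_sum_Icc_of_lt α hi
  refine irreducible_divX_comp_iterate_of_norm_coeff (hφ ▸ monic_X_pow_add_sum_Icc α p)
    (by omega) (fun i hi ↦ ?_) (by simp [hcoeff 0 (by omega)])
    (by rw [hcoeff 1 (by omega), if_pos le_rfl, hα1]) j
  rw [hdeg] at hi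
  rw [hcoeff i hi]
  split_ifs with hi1
  · exact (hαint i hi1 (by omega)).trans_lt
      (inv_lt_one_of_one_lt₀ (by exact_mod_cast (Fact.out : p.Prime).one_lt))
  · simp

section CompatibleSystem

variable {K Ω : Type*} [Field K] [Field Ω] [Algebra K Ω]

def IsCompatibleSystem (φ : K[X]) (π : ℕ → Ω) : Prop :=
  ∀ n, aeval (π (n + 1)) φ = π n

namespace IsCompatibleSystem

variable {φ : K[X]} {π : ℕ → Ω}

theorem aeval_iterate_comp_X (hπ : IsCompatibleSystem φ π) (m j : ℕ) :
    aeval (π (m + j)) (φ.comp^[j] X) = π m := by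
  induction j generalizing m with
  | zero => simp
  | succ j ih =>
    rw [Function.iterate_succ_apply', aeval_comp, ← add_assoc, add_right_comm, ih, hπ]

theorem adjoin_le_adjoin (hπ : IsCompatibleSystem φ π) {m k : ℕ} (hmk : m ≤ k) :
    K⟮π m⟯ ≤ K⟮π k⟯ := by
  induction k, hmk using Nat.le_induction with
  | base => exact le_rfl
  | succ k _ ih =>
    refine ih.trans (adjoin_simple_le_iff.2 ?_)
    rw [← hπ k]
    exact algebra_adjoin_le_adjoin _ _ (aeval_mem_adjoin_singleton _ _)

theorem aeval_divX_comp_iterate_eq_zero (hπ : IsCompatibleSystem φ π) (hπ0 : π 0 = 0)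
    (hπ1 : π 1 ≠ 0) (h0 : φ.coeff 0 = 0) (j : ℕ) :
    aeval (π (j + 1)) (φ.divX.comp (φ.comp^[j] X)) = 0 := by
  have hφ1 : π 1 * aeval (π 1) φ.divX = 0 := by
    simpa [hπ 0, hπ0, h0] using congrArg (aeval (π 1)) (X_mul_divX_add φ)
  rw [aeval_comp, add_comm, hπ.aeval_iterate_comp_X]
  exact (mul_eq_zero.1 hφ1).resolve_left hπ1

theorem isIntegral (hπ : IsCompatibleSystem φ π) (hπ0 : π 0 = 0) (hπ1 : π 1 ≠ 0)
    (h0 : φ.coeff 0 = 0) {j : ℕ} (hirr : Irreducible (φ.divX.comp (φ.comp^[j] X))) :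
    IsIntegral K (π (j + 1)) :=
  IsAlgebraic.isIntegral ⟨_, hirr.ne_zero, hπ.aeval_divX_comp_iterate_eq_zero hπ0 hπ1 h0 j⟩

theorem finrank_adjoin (hπ : IsCompatibleSystem φ π) (hπ0 : π 0 = 0) (hπ1 : π 1 ≠ 0)
    (h0 : φ.coeff 0 = 0) {j : ℕ} (hirr : Irreducible (φ.divX.comp (φ.comp^[j] X))) :
    finrank K K⟮π (j + 1)⟯ = (φ.natDegree - 1) * φ.natDegree ^ j := by
  rw [adjoin.finrank (hπ.isIntegral hπ0 hπ1 h0 hirr),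
    ← minpoly.eq_of_irreducible hirr (hπ.aeval_divX_comp_iterate_eq_zero hπ0 hπ1 h0 j),
    natDegree_mul_C (inv_ne_zero (leadingCoeff_ne_zero.2 hirr.ne_zero)),
    natDegree_divX_comp_iterate]

end IsCompatibleSystem

end CompatibleSystem

theorem Algebra.trace_eq_neg_nextCoeff_of_aeval_eq_zero {E F : Type*} [Field E] [Field F]
    [Algebra E F] [FiniteDimensional E F] {x : F} (hx : E⟮x⟯ = ⊤) {g : E[X]} (hg : g.Monic)
    (hgx : aeval x g = 0) (hdeg : g.natDegree = finrank E F) :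
    Algebra.trace E F x = -g.nextCoeff := by
  have hint := _root_.IsIntegral.of_finite E x
  have hmin : g = minpoly E x :=
    eq_of_monic_of_dvd_of_natDegree_le (minpoly.monic hint) hg (minpoly.dvd E x hgx) <| by
      rw [hdeg, ← adjoin.finrank hint, hx, finrank_top']
  rw [trace_eq_finrank_mul_minpoly_nextCoeff, ← hmin, hx, IntermediateField.finrank_top]
  simp

theorem IntermediateField.adjoin_simple_gen_eq_top {K Ω : Type*} [Field K] [Field Ω]
    [Algebra K Ω] {x : Ω} (hx : IsIntegral K x) : K⟮AdjoinSimple.gen K x⟯ = ⊤ :=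
  adjoin_eq_top_of_algebra K _ (adjoin.powerBasis hx).adjoin_gen_eq_top

theorem relTrace_eq_neg_nextCoeff_sub_smul {K Ω : Type*} [Field K] [Field Ω] [Algebra K Ω]
    {x : Ω} (hx : IsIntegral K x) {E : IntermediateField K Ω} (h : E ≤ K⟮x⟯) {q : K[X]}
    (hq : q.Monic) (hq2 : 2 ≤ q.natDegree) (hqx : aeval x q ∈ E)
    (hdeg : finrank K E * q.natDegree = finrank K K⟮x⟯) (s : E) (y : K⟮x⟯)
    (hy : (y : Ω) = x - s) :
    relTrace h y = -algebraMap K E q.nextCoeff - q.natDegree • s := by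
  let _ : Algebra E K⟮x⟯ := (inclusion h).toRingHom.toAlgebra
  have : IsScalarTower K E K⟮x⟯ := .of_algebraMap_eq fun _ ↦ rfl
  have := adjoin.finiteDimensional hx
  have : FiniteDimensional E K⟮x⟯ := .right K E _
  have : FiniteDimensional K E := .left K E K⟮x⟯
  have hrank : finrank E K⟮x⟯ = q.natDegree :=
    Nat.eq_of_mul_eq_mul_left (finrank_pos (R := K) (M := E)) (by rw [finrank_mul_finrank, hdeg])
  -- `g = q − q(x)` is the minimal polynomial of `x` over `E`, by the degree count `hrank`
  set g : E[X] := q.map (algebraMap K E) - C ⟨aeval x q, hqx⟩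
  have hgdeg : g.natDegree = q.natDegree := by rw [natDegree_sub_C, natDegree_map]
  have hg : g.Monic := (hq.map _).sub_of_left <| by
    rw [degree_map, degree_eq_natDegree hq.ne_zero]
    exact degree_C_le.trans_lt (by exact_mod_cast (by omega : 0 < q.natDegree))
  have hgx : aeval (AdjoinSimple.gen K x) g = 0 := by
    apply Subtype.val_injective
    simp only [g, aeval_sub, aeval_map_algebraMap, aeval_C, AddSubgroupClass.coe_sub,
      AdjoinSimple.coe_aeval_gen_apply, ZeroMemClass.coe_zero]
    exact sub_self _
  have hgnext : g.nextCoeff = algebraMap K E q.nextCoeff := by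
    rw [nextCoeff_of_natDegree_pos (by omega), hgdeg, nextCoeff_of_natDegree_pos (by omega),
      coeff_sub, coeff_map, coeff_C, if_neg (by omega), sub_zero]
  have hy' : y = AdjoinSimple.gen K x - algebraMap E K⟮x⟯ s := Subtype.ext hy
  change Algebra.trace E K⟮x⟯ y = _
  rw [hy', map_sub, Algebra.trace_eq_neg_nextCoeff_of_aeval_eq_zero
      (adjoin_eq_top_of_adjoin_eq_top K (adjoin_simple_gen_eq_top hx)) hg hgx
      (hgdeg.trans hrank.symm),
    Algebra.trace_algebraMap, hrank, hgnext]

theorem stmt6_general (p : ℕ) [Fact p.Prime]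
    (Ω : Type*) [Field Ω] [Algebra ℚ_[p] Ω]
    (α : ℕ → ℚ_[p])
    (hαint : ∀ i, 1 ≤ i → i ≤ p - 1 → ‖α i‖ ≤ (p : ℝ)⁻¹)
    (hα1 : ‖α 1‖ = (p : ℝ)⁻¹)
    (φ : Polynomial ℚ_[p])
    (hφ : φ = X ^ p + ∑ i ∈ Finset.Icc 1 (p - 1), C (α i) * X ^ i)
    (π : ℕ → Ω) (hπ0 : π 0 = 0) (hπne : ∀ n, 1 ≤ n → π n ≠ 0)
    (hπ : ∀ n, Polynomial.aeval (π (n + 1)) φ = π n)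
    (d : ℕ) (hd : 1 ≤ d) (b : ℕ → ℚ_[p])
    (ℓ : ℕ → Ω)
    (hmem : ∀ m, ℓ m ∈ (ℚ_[p]⟮π m⟯ : IntermediateField ℚ_[p] Ω))
    (hfe : ∀ n, d + 1 ≤ n →
      ℓ n = π n - ∑ i ∈ Finset.Icc 1 d, algebraMap ℚ_[p] Ω (b i) * ℓ (n - i)) :
    ∀ n : ℕ, ∀ h : (ℚ_[p]⟮π (n + d)⟯ : IntermediateField ℚ_[p] Ω) ≤ ℚ_[p]⟮π (n + d + 1)⟯,
      ((relTrace h ⟨ℓ (n + d + 1), hmem (n + d + 1)⟩ : (ℚ_[p]⟮π (n + d)⟯ :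
          IntermediateField ℚ_[p] Ω)) : Ω) =
        -(algebraMap ℚ_[p] Ω (α (p - 1))) -
          (p : Ω) * ∑ i ∈ Finset.Icc 1 d, algebraMap ℚ_[p] Ω (b i) * ℓ (n + d + 1 - i) := by
  intro n h
  have hp2 : 2 ≤ p := (Fact.out : p.Prime).two_le
  have hπ' : IsCompatibleSystem φ π := hπ
  have hmon : φ.Monic := hφ ▸ monic_X_pow_add_sum_Icc α p
  have hdeg : φ.natDegree = p := hφ ▸ natDegree_X_pow_add_sum_Icc α p
  have hcoeff (i : ℕ) (hi : i < p) : φ.coeff i = if 1 ≤ i then α i else 0 :=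
    hφ ▸ coeff_X_pow_add_sum_Icc_of_lt α hi
  have h0 : φ.coeff 0 = 0 := by simp [hcoeff 0 (by omega)]
  have hirr := irreducible_divX_comp_iterate_of_eq_X_pow_add_sum hαint hα1 hφ
  have hrank : finrank ℚ_[p] ℚ_[p]⟮π (n + d)⟯ * φ.natDegree =
      finrank ℚ_[p] ℚ_[p]⟮π (n + d + 1)⟯ := by
    obtain ⟨e, he⟩ : ∃ e, n + d = e + 1 := ⟨n + d - 1, by omega⟩
    rw [he, hπ'.finrank_adjoin hπ0 (hπne 1 le_rfl) h0 (hirr e),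
      hπ'.finrank_adjoin hπ0 (hπne 1 le_rfl) h0 (hirr (e + 1)), hdeg]
    ring
  have hS : ∑ i ∈ Finset.Icc 1 d, algebraMap ℚ_[p] Ω (b i) * ℓ (n + d + 1 - i) ∈
      ℚ_[p]⟮π (n + d)⟯ := by
    refine sum_mem fun i hi ↦
      mul_mem (IntermediateField.algebraMap_mem _ _) (hπ'.adjoin_le_adjoin ?_ (hmem _))
    rw [Finset.mem_Icc] at hi
    omega
  rw [relTrace_eq_neg_nextCoeff_sub_smul (hπ'.isIntegral hπ0 (hπne 1 le_rfl) h0 (hirr (n + d))) h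
      hmon (by omega) (hπ (n + d) ▸ mem_adjoin_simple_self _ _) hrank ⟨_, hS⟩ _
      (hfe _ (by omega)),
    nextCoeff_of_natDegree_pos (by omega), hdeg, hcoeff (p - 1) (by omega), if_pos (by omega)]
  simp [nsmul_eq_mul]

/-- In the Lubin–Tate tower, with `J(X) = b₁X + ⋯ + b_dX^d` (`pⁱbᵢ ∈ pℤ_p`) and
`l = [1 − J(φ) + J(φ)² − ⋯] ∘ X` (so that at the points `π_n` the values
`ℓ n = l(π_n)` lie in `ℚ_p(π_n)` and satisfy `ℓ n = π_n − Σᵢ bᵢ ℓ(n−i)`), one has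
`Tr_{ℚ_p(π_n)/ℚ_p(π_{n−1})} l(π_n) = −α_{p−1} − p(b₁l(π_{n−1}) + ⋯ + b_d l(π_{n−d}))`. -/
theorem stmt6 (p : ℕ) [Fact p.Prime]
    (Ω : Type*) [Field Ω] [Algebra ℚ_[p] Ω]
    (α : ℕ → ℚ_[p])
    (hαint : ∀ i, 1 ≤ i → i ≤ p - 1 → ‖α i‖ ≤ (p : ℝ)⁻¹)
    (hα1 : ‖α 1‖ = (p : ℝ)⁻¹)
    (φ : Polynomial ℚ_[p])
    (hφ : φ = X ^ p + ∑ i ∈ Finset.Icc 1 (p - 1), C (α i) * X ^ i)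
    (π : ℕ → Ω) (hπ0 : π 0 = 0) (hπne : ∀ n, 1 ≤ n → π n ≠ 0)
    (hπ : ∀ n, Polynomial.aeval (π (n + 1)) φ = π n)
    (d : ℕ) (hd : 1 ≤ d) (b : ℕ → ℚ_[p])
    (hb : ∀ i, 1 ≤ i → i ≤ d → ‖(p : ℚ_[p]) ^ i * b i‖ ≤ (p : ℝ)⁻¹)
    (ℓ : ℕ → Ω)
    (hmem : ∀ m, ℓ m ∈ (ℚ_[p]⟮π m⟯ : IntermediateField ℚ_[p] Ω))
    (hfe : ∀ n, d + 1 ≤ n →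
      ℓ n = π n - ∑ i ∈ Finset.Icc 1 d, algebraMap ℚ_[p] Ω (b i) * ℓ (n - i)) :
    ∀ n : ℕ, ∀ h : (ℚ_[p]⟮π (n + d)⟯ : IntermediateField ℚ_[p] Ω) ≤ ℚ_[p]⟮π (n + d + 1)⟯,
      ((relTrace h ⟨ℓ (n + d + 1), hmem (n + d + 1)⟩ : (ℚ_[p]⟮π (n + d)⟯ :
          IntermediateField ℚ_[p] Ω)) : Ω) =
        -(algebraMap ℚ_[p] Ω (α (p - 1))) -
          (p : Ω) * ∑ i ∈ Finset.Icc 1 d, algebraMap ℚ_[p] Ω (b i) * ℓ (n + d + 1 - i) :=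
  stmt6_general p Ω α hαint hα1 φ hφ π hπ0 hπne hπ d hd b ℓ hmem hfe
end

section
/- Let p be a prime and Λ = ℤ_p[[X]]. Suppose (e_{n+1}, e_n) ∈ M_e(Λ)² satisfies ω_{n+1} | e_{n+1} and ω_n | e_n, where ω_k = (1+X)^{p^k} − 1, and define recursively (e_i, e_{i−1}) = M_i^{−1}(e_{i+1}, e_i) for i = n, n−1, …, 1, where M_i = [[pA_i, −A'_iΦ_i],[I_e, 0]] with A_i, A'_i ∈ M_e(Λ) and A'_i ∈ GL_e(Λ), and Φ_i = ω_i/ω_{i−1}. Then all e_i lie in M_e(Λ), ω_{i} | e_i for each i, and each e_i is a sum of matrices each divisible by a product of at least ⌈(n−i)/2⌉ factors from the multiset {p, Φ_1, …, Φ_n} (counting p with multiplicity and each Φ_j at most once). Consequently e_1 ≡ 0 mod (p^{⌊n/2⌋−j}, X^{p^{j−1}}) for every j ≥ 1 with ⌊n/2⌋ > j. -/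
open Finset PowerSeries

/-!
Write `e_i = ω_i c_i`. Since `ω_{i+1} = Φ_{i+1} Φ_i ω_{i-1}` and `ω_i = Φ_i ω_{i-1}`, the division
by `Φ_i` in the recursion is exact and `c_{i-1} = A'_i⁻¹ (-Φ_{i+1} c_{i+1} + p A_i c_i)`. Every step
thus multiplies by `p` or by a fresh `Φ_{i+1}`, so `c` gains a factor every two steps; at the top,
where `Φ_{n+1}` is not available, `Φ_{n+1} ≡ p mod ω_n` supplies it. For the congruence,
`Φ_t ∈ (p, X^{p^{t-1}})`, and a product of `k` elements of `(p, y)` lies in `(p^k, y)`.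
-/

theorem Nat.forall_le_succ_of_two_step_down {P : ℕ → Prop} {n : ℕ} (h₁ : P (n + 1)) (h₀ : P n)
    (step : ∀ m, 1 ≤ m → m ≤ n → P (m + 1) → P m → P (m - 1)) : ∀ i ≤ n + 1, P i := by
  have key : ∀ d ≤ n, P (n - d) ∧ P (n - d + 1) := by
    intro d
    induction d with
    | zero => exact fun _ => ⟨h₀, h₁⟩
    | succ d ih =>
      intro hd
      obtain ⟨hd₀, hd₁⟩ := ih (by omega)
      have hsucc : n - (d + 1) + 1 = n - d := by omega
      refine ⟨?_, hsucc ▸ hd₀⟩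
      simpa [Nat.sub_sub] using step (n - d) (by omega) (by omega) hd₁ hd₀
  intro i hi
  rcases hi.lt_or_eq with hi | rfl
  · simpa [show n - (n - i) = i by omega] using (key (n - i) (by omega)).1
  · exact h₁

theorem Ideal.sup_pow_le_pow_sup {R : Type*} [CommSemiring R] (I J : Ideal R) (k : ℕ) :
    (I ⊔ J) ^ k ≤ I ^ k ⊔ J := by
  induction k with
  | zero => simp
  | succ k ih =>
    calc (I ⊔ J) ^ (k + 1) = (I ⊔ J) ^ k * (I ⊔ J) := pow_succ _ _
      _ ≤ (I ^ k ⊔ J) * (I ⊔ J) := Ideal.mul_mono_left ih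
      _ ≤ I ^ (k + 1) ⊔ J := by
        rw [Ideal.sup_mul, Ideal.mul_sup, Ideal.mul_sup, pow_succ]
        exact sup_le (sup_le le_sup_left (Ideal.mul_le_right.trans le_sup_right))
          (sup_le (Ideal.mul_le_left.trans le_sup_right) (Ideal.mul_le_left.trans le_sup_right))

def factorIdeal {R : Type*} [CommSemiring R] (q : R) (Φ : ℕ → R) (S : Finset ℕ) (d : ℕ) :
    Ideal R :=
  Ideal.span {x | ∃ (j : ℕ) (T : Finset ℕ), T ⊆ S ∧ d ≤ j + T.card ∧ x = q ^ j * ∏ t ∈ T, Φ t}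

section factorIdeal

variable {R : Type*} [CommSemiring R] {q : R} {Φ : ℕ → R}

theorem factorIdeal_zero (q : R) (Φ : ℕ → R) (S : Finset ℕ) : factorIdeal q Φ S 0 = ⊤ :=
  (Ideal.eq_top_iff_one _).2 <| Ideal.subset_span ⟨0, ∅, empty_subset _, le_rfl, by simp⟩

theorem factorIdeal_mono {S S' : Finset ℕ} {d d' : ℕ} (hS : S ⊆ S') (hd : d' ≤ d) :
    factorIdeal q Φ S d ≤ factorIdeal q Φ S' d' :=
  Ideal.span_mono fun _ ⟨j, T, hT, hj, hx⟩ => ⟨j, T, hT.trans hS, hd.trans hj, hx⟩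

theorem self_mem_factorIdeal (S : Finset ℕ) : q ∈ factorIdeal q Φ S 1 :=
  Ideal.subset_span ⟨1, ∅, empty_subset _, by simp, by simp⟩

theorem apply_mem_factorIdeal {S : Finset ℕ} {t : ℕ} (ht : t ∈ S) : Φ t ∈ factorIdeal q Φ S 1 :=
  Ideal.subset_span ⟨0, {t}, by simpa using ht, by simp, by simp⟩

theorem factorIdeal_mul_le {S S' : Finset ℕ} (h : Disjoint S S') (d d' : ℕ) :
    factorIdeal q Φ S d * factorIdeal q Φ S' d' ≤ factorIdeal q Φ (S ∪ S') (d + d') := by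
  rw [factorIdeal, factorIdeal, Ideal.span_mul_span', Ideal.span_le]
  rintro _ ⟨_, ⟨j, T, hT, hj, rfl⟩, _, ⟨j', T', hT', hj', rfl⟩, rfl⟩
  have hTT' : Disjoint T T' := h.mono hT hT'
  refine Ideal.subset_span ⟨j + j', T ∪ T', union_subset_union hT hT', ?_, ?_⟩
  · rw [card_union_of_disjoint hTT']
    omega
  · rw [prod_union hTT', pow_add]
    ring

theorem smul_mem_matrix_factorIdeal {ι : Type*} [Fintype ι] [DecidableEq ι]
    {S S' T : Finset ℕ} {d d' e : ℕ} (hSS' : Disjoint S S') (hT : S ∪ S' ⊆ T) (he : e ≤ d + d')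
    {x : R} (hx : x ∈ factorIdeal q Φ S d) {M : Matrix ι ι R}
    (hM : M ∈ (factorIdeal q Φ S' d').matrix ι) : x • M ∈ (factorIdeal q Φ T e).matrix ι :=
  fun k l => factorIdeal_mono hT he (factorIdeal_mul_le hSS' d d' (Ideal.mul_mem_mul hx (hM k l)))

theorem factorIdeal_le_pow {I : Ideal R} {S F : Finset ℕ} (d : ℕ) (hq : q ∈ I)
    (hΦ : ∀ t ∈ S \ F, Φ t ∈ I) : factorIdeal q Φ S d ≤ I ^ (d - F.card) := by
  refine Ideal.span_le.2 ?_
  rintro _ ⟨j, T, hT, hj, rfl⟩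
  have hcard : d - F.card ≤ j + (T \ F).card := by
    have := le_card_sdiff F T
    omega
  have hprod : ∏ t ∈ T \ F, Φ t ∈ I ^ (T \ F).card := by
    rw [← prod_const]
    exact Ideal.prod_mem_prod fun t ht => hΦ t (sdiff_subset_sdiff hT subset_rfl ht)
  rw [SetLike.mem_coe, ← prod_inter_mul_prod_sdiff T F, mul_left_comm]
  refine Ideal.mul_mem_left _ _ (Ideal.pow_le_pow_right hcard ?_)
  rw [pow_add]
  exact Ideal.mul_mem_mul (Ideal.pow_mem_pow hq j) hprod

theorem factorIdeal_le_span_pow {y : R} {S F : Finset ℕ} (d : ℕ)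
    (hΦ : ∀ t ∈ S \ F, Φ t ∈ Ideal.span {q, y}) :
    factorIdeal q Φ S d ≤ Ideal.span {q ^ (d - F.card), y} := by
  refine (factorIdeal_le_pow d (Ideal.subset_span (by simp)) hΦ).trans ?_
  rw [Ideal.span_insert, Ideal.span_insert, ← Ideal.span_singleton_pow]
  exact Ideal.sup_pow_le_pow_sup _ _ _

end factorIdeal

theorem Matrix.map_recursion_step {R K : Type*} [CommRing R] [Field K] (f : R →+* K)
    {ι : Type*} [Fintype ι] [DecidableEq ι] {a b w q : R} (ha : f a ≠ 0)
    (A A' C₁ C₂ : Matrix ι ι R) (hA' : IsUnit A'.det) :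
    (f a)⁻¹ • ((A'.map f)⁻¹ *
        (-((b * (a * w)) • C₂).map f + f q • (A.map f * ((a * w) • C₁).map f))) =
      (w • (A'⁻¹ * (-(b • C₂) + q • (A * C₁)))).map f := by
  have hinv : (A'.map f)⁻¹ = A'⁻¹.map f := Matrix.inv_eq_right_inv <| by
    rw [← Matrix.map_mul, Matrix.mul_nonsing_inv _ hA', Matrix.map_one _ f.map_zero f.map_one]
  have hsmul (c : R) (M : Matrix ι ι R) : (c • M).map f = f c • M.map f :=
    Matrix.map_smul' f c M (map_mul f)
  simp only [hinv, hsmul, Matrix.map_mul, Matrix.map_add _ (map_add f),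
    Matrix.map_neg _ (map_neg f), Matrix.mul_add, Matrix.mul_neg, Matrix.mul_smul, map_mul,
    smul_add, smul_neg, smul_smul]
  field_simp

theorem exists_mem_factorIdeal_matrix_of_recursion {R K : Type*} [CommRing R] [Field K]
    [Algebra R K] {q : R} {n r : ℕ} {Φ ω : ℕ → R} (hω : ∀ i, 1 ≤ i → ω i = Φ i * ω (i - 1))
    (hΦ : ∀ i, algebraMap R K (Φ i) ≠ 0) (hΦtop : Φ (n + 1) ∈ factorIdeal q Φ {n} 1)
    {A A' : ℕ → Matrix (Fin r) (Fin r) R} (hA' : ∀ i, IsUnit (A' i).det)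
    {E : ℕ → Matrix (Fin r) (Fin r) K}
    (hrec : ∀ i, 1 ≤ i → i ≤ n →
      E (i - 1) = (algebraMap R K (Φ i))⁻¹ • (((A' i).map (algebraMap R K))⁻¹ *
        (-(E (i + 1)) + algebraMap R K q • ((A i).map (algebraMap R K) * E i))))
    (htop1 : ∃ B : Matrix (Fin r) (Fin r) R, E (n + 1) = (ω (n + 1) • B).map (algebraMap R K))
    (htop0 : ∃ B : Matrix (Fin r) (Fin r) R, E n = (ω n • B).map (algebraMap R K)) :
    ∀ i ≤ n + 1, ∃ C, E i = (ω i • C).map (algebraMap R K) ∧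
      C ∈ (factorIdeal q Φ (Icc (i + 1) n) ((n - i + 1) / 2)).matrix (Fin r) := by
  have hΦsucc : ∀ m ≤ n, Φ (m + 1) ∈ factorIdeal q Φ (Icc m n \ Icc (m + 2) n) 1 := by
    intro m hmn
    rcases hmn.lt_or_eq with hmn | rfl
    · exact apply_mem_factorIdeal (by simp only [mem_sdiff, mem_Icc]; omega)
    · exact factorIdeal_mono (by intro t; simp only [mem_singleton, mem_sdiff, mem_Icc]; omega)
        le_rfl hΦtop
  refine Nat.forall_le_succ_of_two_step_down ?_ ?_ ?_
  · obtain ⟨B, hB⟩ := htop1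
    exact ⟨B, hB, by simp [factorIdeal_zero]⟩
  · obtain ⟨B, hB⟩ := htop0
    exact ⟨B, hB, by simp [factorIdeal_zero]⟩
  rintro m hm hmn ⟨C₂, hE₂, hC₂⟩ ⟨C₁, hE₁, hC₁⟩
  refine ⟨(A' m)⁻¹ * (-(Φ (m + 1) • C₂) + q • (A m * C₁)), ?_, ?_⟩
  · rw [hrec m hm hmn, hE₂, hE₁, hω (m + 1) (by omega), Nat.add_sub_cancel, hω m hm]
    exact Matrix.map_recursion_step _ (hΦ m) _ _ _ _ (hA' m)
  · refine Ideal.mul_mem_left _ _ (add_mem (neg_mem ?_) ?_)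
    · exact smul_mem_matrix_factorIdeal disjoint_sdiff_self_left
        (by
          rw [sdiff_union_of_subset (Icc_subset_Icc (by omega) le_rfl)]
          exact Icc_subset_Icc (by omega) le_rfl)
        (by omega) (hΦsucc m hmn) hC₂
    · exact smul_mem_matrix_factorIdeal (disjoint_empty_left _)
        (by rw [empty_union]; exact Icc_subset_Icc (by omega) le_rfl) (by omega)
        (self_mem_factorIdeal _) (Ideal.mul_mem_left _ _ hC₁)

theorem geom_sum_pow_mul_pow_sub_one {R : Type*} [CommRing R] (u : R) (p i : ℕ) :
    (∑ k ∈ range p, u ^ (k * p ^ i)) * (u ^ p ^ i - 1) = u ^ p ^ (i + 1) - 1 := by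
  simp_rw [mul_comm _ (p ^ i), pow_mul]
  rw [geom_sum_mul, ← pow_mul, ← pow_succ]

theorem pow_sub_one_dvd_geom_sum_pow_sub {R : Type*} [CommRing R] (u : R) (p i : ℕ) :
    u ^ p ^ i - 1 ∣ ∑ k ∈ range p, u ^ (k * p ^ i) - p := by
  have hp : (p : R) = ∑ _k ∈ range p, 1 := by simp
  rw [hp, ← sum_sub_distrib]
  refine dvd_sum fun k _ => ?_
  simpa [mul_comm k, pow_mul] using sub_dvd_pow_sub_pow (u ^ p ^ i) 1 k

theorem exists_one_add_pow_prime_pow_sub_one {R : Type*} [CommRing R] {p : ℕ} (hp : p.Prime)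
    (x : R) (i : ℕ) : ∃ c, (1 + x) ^ p ^ i - 1 = x ^ p ^ i + p * c := by
  rw [(Commute.one_left x).add_pow_prime_pow_eq hp i]
  generalize (Finset.sum _ _ : R) = S
  exact ⟨x * S, by ring⟩

theorem geom_sum_one_add_pow_mem_span {R : Type*} [CommRing R] {p : ℕ} (hp : p.Prime) (x : R)
    {i j : ℕ} (hji : j ≤ i) :
    ∑ k ∈ range p, (1 + x) ^ (k * p ^ i) ∈ Ideal.span {(p : R), x ^ p ^ j} := by
  obtain ⟨g, hg⟩ := pow_sub_one_dvd_geom_sum_pow_sub (1 + x) p i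
  obtain ⟨c, hc⟩ := exists_one_add_pow_prime_pow_sub_one hp x i
  obtain ⟨y, hy⟩ : x ^ p ^ j ∣ x ^ p ^ i := pow_dvd_pow x (Nat.pow_le_pow_right hp.pos hji)
  rw [sub_eq_iff_eq_add.1 hg, hc, hy]
  have hpmem : (p : R) ∈ Ideal.span {(p : R), x ^ p ^ j} := Ideal.subset_span (by simp)
  have hxmem : x ^ p ^ j ∈ Ideal.span {(p : R), x ^ p ^ j} := Ideal.subset_span (by simp)
  rw [show (x ^ p ^ j * y + p * c) * g + p = x ^ p ^ j * (y * g) + p * (c * g + 1) by ring]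
  exact add_mem (Ideal.mul_mem_right _ _ hxmem) (Ideal.mul_mem_right _ _ hpmem)

theorem geom_sum_one_add_X_pow_ne_zero {R : Type*} [CommRing R] [CharZero R] {p : ℕ}
    (hp : p ≠ 0) (m : ℕ) : ∑ k ∈ range p, (1 + X : R⟦X⟧) ^ (k * m) ≠ 0 := fun h => by
  simpa [hp] using congrArg (constantCoeff (R := R)) h

/-- The key estimate in the construction of the integral characteristic power series:
a backwards recursion `(e_i, e_{i−1}) = M_i⁻¹(e_{i+1}, e_i)` with
`M_i = [[pA_i, −A'_iΦ_i],[I, 0]]`, starting from data divisible by `ω_{n+1}`, `ω_n`,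
stays integral, each `e_i` is divisible by `ω_i` and is a sum of terms divisible by at
least `⌈(n−i)/2⌉` factors from `{p, Φ_1, …, Φ_n}` (each `Φ_j` counted at most once), and
consequently `e_1 ≡ 0 mod (p^{⌊n/2⌋−j}, X^{p^{j−1}})` for each `j ≥ 1` with `⌊n/2⌋ > j`. -/
theorem stmt18 (p : ℕ) [Fact p.Prime] (n r : ℕ) (hn : 1 ≤ n)
    (Φ ω : ℕ → PowerSeries ℤ_[p])
    (hΦ : ∀ i, Φ i = ∑ k ∈ Finset.range p, (1 + PowerSeries.X) ^ (k * p ^ (i - 1)))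
    (hω : ∀ i, ω i = (1 + PowerSeries.X) ^ p ^ i - 1)
    (A A' : ℕ → Matrix (Fin r) (Fin r) (PowerSeries ℤ_[p]))
    (hA' : ∀ i, IsUnit (A' i).det)
    (E : ℕ → Matrix (Fin r) (Fin r) (FractionRing (PowerSeries ℤ_[p])))
    (hrec : ∀ i, 1 ≤ i → i ≤ n →
      E (i - 1) =
        (algebraMap (PowerSeries ℤ_[p]) (FractionRing (PowerSeries ℤ_[p])) (Φ i))⁻¹ •
          (((A' i).map (algebraMap (PowerSeries ℤ_[p]) (FractionRing (PowerSeries ℤ_[p]))))⁻¹ *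
            (-(E (i + 1)) + (p : FractionRing (PowerSeries ℤ_[p])) •
              ((A i).map (algebraMap (PowerSeries ℤ_[p]) (FractionRing (PowerSeries ℤ_[p]))) *
                E i))))
    (htop1 : ∃ B : Matrix (Fin r) (Fin r) (PowerSeries ℤ_[p]),
      E (n + 1) = (ω (n + 1) • B).map
        (algebraMap (PowerSeries ℤ_[p]) (FractionRing (PowerSeries ℤ_[p]))))
    (htop0 : ∃ B : Matrix (Fin r) (Fin r) (PowerSeries ℤ_[p]),
      E n = (ω n • B).map
        (algebraMap (PowerSeries ℤ_[p]) (FractionRing (PowerSeries ℤ_[p])))) :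
    (∀ i ≤ n + 1, ∃ B : Matrix (Fin r) (Fin r) (PowerSeries ℤ_[p]),
      E i = B.map (algebraMap (PowerSeries ℤ_[p]) (FractionRing (PowerSeries ℤ_[p]))) ∧
      (∃ Cc : Matrix (Fin r) (Fin r) (PowerSeries ℤ_[p]), B = ω i • Cc) ∧
      (∀ k l, B k l ∈ Ideal.span {x : PowerSeries ℤ_[p] | ∃ (j : ℕ) (T : Finset ℕ),
        T ⊆ Finset.Icc 1 n ∧ (n - i + 1) / 2 ≤ j + T.card ∧
        x = (p : PowerSeries ℤ_[p]) ^ j * ∏ t ∈ T, Φ t})) ∧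
    (∀ j : ℕ, 1 ≤ j → j < n / 2 →
      ∀ B : Matrix (Fin r) (Fin r) (PowerSeries ℤ_[p]),
        E 1 = B.map (algebraMap (PowerSeries ℤ_[p]) (FractionRing (PowerSeries ℤ_[p]))) →
        ∀ k l, B k l ∈ Ideal.span
          {(p : PowerSeries ℤ_[p]) ^ (n / 2 - j), PowerSeries.X ^ p ^ (j - 1)}) := by
  have hp : p.Prime := Fact.out
  have hωΦ : ∀ i, 1 ≤ i → ω i = Φ i * ω (i - 1) := fun i hi => by
    rw [hω, hω, hΦ, geom_sum_pow_mul_pow_sub_one, Nat.sub_add_cancel hi]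
  have hΦne : ∀ i, algebraMap _ (FractionRing (PowerSeries ℤ_[p])) (Φ i) ≠ 0 := fun i => by
    rw [hΦ]
    exact (map_ne_zero_iff _ (IsFractionRing.injective _ _)).2
      (geom_sum_one_add_X_pow_ne_zero hp.ne_zero _)
  have hΦtop : Φ (n + 1) ∈ factorIdeal (p : PowerSeries ℤ_[p]) Φ {n} 1 := by
    obtain ⟨g, hg⟩ := pow_sub_one_dvd_geom_sum_pow_sub (1 + X : PowerSeries ℤ_[p]) p n
    rw [hΦ, Nat.add_sub_cancel, sub_eq_iff_eq_add.1 hg, ← hω, hωΦ n hn, mul_assoc]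
    exact add_mem (Ideal.mul_mem_right _ _ (apply_mem_factorIdeal (mem_singleton_self n)))
      (self_mem_factorIdeal _)
  have main := exists_mem_factorIdeal_matrix_of_recursion hωΦ hΦne hΦtop hA'
    (by simpa only [map_natCast] using hrec) htop1 htop0
  refine ⟨fun i hi => ?_, fun j _ _ B hB k l => ?_⟩
  · obtain ⟨C, hE, hC⟩ := main i hi
    exact ⟨ω i • C, hE, ⟨C, rfl⟩, fun k l => factorIdeal_mono
      (Icc_subset_Icc (by omega) le_rfl) le_rfl (Ideal.mul_mem_left _ (ω i) (hC k l))⟩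
  · obtain ⟨C, hE, hC⟩ := main 1 (by omega)
    obtain rfl : B = ω 1 • C :=
      Matrix.map_injective (IsFractionRing.injective _ _) (hB.symm.trans hE)
    have hspan := factorIdeal_le_span_pow (y := X ^ p ^ (j - 1)) (F := Icc 1 j)
      ((n - 1 + 1) / 2) (fun t ht => by
        rw [mem_sdiff, mem_Icc, mem_Icc] at ht
        rw [hΦ]
        exact geom_sum_one_add_pow_mem_span hp X (by omega))
      (Ideal.mul_mem_left _ (ω 1) (hC k l))
    rwa [Nat.card_Icc, show (n - 1 + 1) / 2 - (j + 1 - 1) = n / 2 - j by omega] at hspan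
end
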